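/- arXiv:1909.09832 — 5 statements merged into one kernel-verified Lean document; each statement's English description precedes it below -/
import Mathlib

section
/- Let Λ be a multiplicatively written abelian group and let M be a submonoid of Λ. Then there exists a valuative submonoid V of Λ which dominates M. -/
/-- A submonoid `V` of an abelian group `Λ` is *valuative* if for every `x : Λ`,
either `x ∈ V` or `x⁻¹ ∈ V`. -/
def Submonoid.IsValuative {Λ : Type*} [CommGroup Λ] (V : Submonoid Λ) : Prop :=
  ∀ x : Λ, x ∈ V ∨ x⁻¹ ∈ V

/-- The set of invertible elements of a submonoid `N` of an abelian group:
those `x ∈ N` with `x⁻¹ ∈ N`. -/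
def Submonoid.unitsSet {Λ : Type*} [CommGroup Λ] (N : Submonoid Λ) : Set Λ :=
  {x | x ∈ N ∧ x⁻¹ ∈ N}

/-- A submonoid `M₂` *dominates* a submonoid `M₁` if `M₁ ⊆ M₂` and `M₂ˣ ∩ M₁ = M₁ˣ`. -/
def Submonoid.Dominates {Λ : Type*} [CommGroup Λ] (M₁ M₂ : Submonoid Λ) : Prop :=
  M₁ ≤ M₂ ∧ M₂.unitsSet ∩ (M₁ : Set Λ) = M₁.unitsSet

lemma dominates_iff {Λ : Type*} [CommGroup Λ] {M N : Submonoid Λ} :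
    M.Dominates N ↔ M ≤ N ∧ ∀ m ∈ M, m⁻¹ ∈ N → m⁻¹ ∈ M := by
  constructor
  · rintro ⟨h1, h2⟩
    refine ⟨h1, fun m hm hinv => ?_⟩
    have : m ∈ N.unitsSet ∩ (M : Set Λ) := ⟨⟨h1 hm, hinv⟩, hm⟩
    rw [h2] at this
    exact this.2
  · rintro ⟨h1, h2⟩
    refine ⟨h1, Set.ext fun m => ?_⟩
    constructor
    · rintro ⟨⟨_, hinv⟩, hm⟩
      exact ⟨hm, h2 m hm hinv⟩
    · rintro ⟨hm, hinv⟩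
      exact ⟨⟨h1 hm, h1 hinv⟩, hm⟩

lemma key_step {Λ : Type*} [CommGroup Λ] {M V : Submonoid Λ} (hV : M.Dominates V) (x : Λ) :
    M.Dominates (V ⊔ Submonoid.closure {x}) ∨ M.Dominates (V ⊔ Submonoid.closure {x⁻¹}) := by
  rw [dominates_iff] at hV
  obtain ⟨hMV, hdom⟩ := hV
  by_contra hcon
  push_neg at hcon
  obtain ⟨h1, h2⟩ := hcon
  rw [dominates_iff] at h1 h2
  push_neg at h1 h2
  obtain ⟨m, hm, hmi, hmNi⟩ := h1 (hMV.trans le_sup_left)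
  obtain ⟨m', hm', hmi', hmNi'⟩ := h2 (hMV.trans le_sup_left)
  rw [Submonoid.mem_sup] at hmi hmi'
  obtain ⟨v, hv, z, hz, heq1⟩ := hmi
  obtain ⟨w, hw, z', hz', heq2⟩ := hmi'
  rw [Submonoid.mem_closure_singleton] at hz hz'
  obtain ⟨a, rfl⟩ := hz
  obtain ⟨b, rfl⟩ := hz'
  rcases Nat.eq_zero_or_pos a with rfl | ha
  · refine hmNi (hdom m hm ?_)
    rw [← heq1, pow_zero, mul_one]; exact hv
  rcases Nat.eq_zero_or_pos b with rfl | hb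
  · refine hmNi' (hdom m' hm' ?_)
    rw [← heq2, pow_zero, mul_one]; exact hw
  set t : Λ := m ^ b * m' ^ a with ht
  have htM : t ∈ M := M.mul_mem (M.pow_mem hm b) (M.pow_mem hm' a)
  have htinv : t⁻¹ ∈ V := by
    have : t⁻¹ = v ^ b * w ^ a := by
      rw [ht, mul_inv, ← inv_pow, ← inv_pow, ← heq1, ← heq2, mul_pow, mul_pow,
        mul_mul_mul_comm]
      have hx : (x ^ a) ^ b * (x⁻¹ ^ b) ^ a = 1 := by
        rw [← pow_mul, ← pow_mul, inv_pow, Nat.mul_comm b a]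
        exact mul_inv_cancel _
      rw [hx, mul_one]
    rw [this]
    exact V.mul_mem (V.pow_mem hv b) (V.pow_mem hw a)
  have htM' : t⁻¹ ∈ M := hdom t htM htinv
  obtain ⟨c, rfl⟩ : ∃ c, b = c + 1 := ⟨b - 1, (Nat.succ_pred_eq_of_pos hb).symm⟩
  refine hmNi ?_
  have : m⁻¹ = m ^ c * m' ^ a * t⁻¹ := by rw [ht]; group
  rw [this]
  exact M.mul_mem (M.mul_mem (M.pow_mem hm c) (M.pow_mem hm' a)) htM'

/-- For every submonoid `M` of an abelian group `Λ` there is a valuative submonoid `V` of `Λ`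
which dominates `M`. -/
theorem exists_valuative_dominating {Λ : Type*} [CommGroup Λ] (M : Submonoid Λ) :
    ∃ V : Submonoid Λ, V.IsValuative ∧ M.Dominates V := by
  have hself : M.Dominates M := ⟨le_rfl, by ext x; exact ⟨fun h => h.1, fun h => ⟨h, h.1⟩⟩⟩
  have hub : ∀ c ⊆ {N : Submonoid Λ | M.Dominates N}, IsChain (· ≤ ·) c → ∀ y ∈ c,
      ∃ ub ∈ {N : Submonoid Λ | M.Dominates N}, ∀ z ∈ c, z ≤ ub := by
    intro c hc hchain y hy
    refine ⟨sSup c, ?_, fun z hz => le_sSup hz⟩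
    have hdir : DirectedOn (· ≤ ·) c := hchain.directedOn
    have hne : c.Nonempty := ⟨y, hy⟩
    rw [Set.mem_setOf_eq, dominates_iff]
    constructor
    · exact le_trans (hc hy).1 (le_sSup hy)
    · intro m hm hinv
      rw [Submonoid.mem_sSup_of_directedOn hne hdir] at hinv
      obtain ⟨N, hN, hinvN⟩ := hinv
      exact (dominates_iff.mp (hc hN)).2 m hm hinvN
  obtain ⟨V, -, hVdom, hVmax⟩ :=
    zorn_le_nonempty₀ {N : Submonoid Λ | M.Dominates N} hub M hself
  refine ⟨V, fun x => ?_, hVdom⟩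
  rcases key_step hVdom x with h | h
  · left
    have : V ⊔ Submonoid.closure {x} ≤ V := hVmax h le_sup_left
    exact this (Submonoid.mem_sup_right Submonoid.mem_closure_singleton_self)
  · right
    have : V ⊔ Submonoid.closure {x⁻¹} ≤ V := hVmax h le_sup_left
    exact this (Submonoid.mem_sup_right Submonoid.mem_closure_singleton_self)
end

section
/- Let Λ₀ be an abelian group which is a subgroup of abelian groups Λ₁ and Λ₂, and let Λ be the pushout of Λ₁ ← Λ₀ → Λ₂ in the category of abelian groups, i.e. Λ = (Λ₁ × Λ₂)/{(a, a⁻¹) : a ∈ Λ₀}, so that Λ₁ and Λ₂ inject into Λ with intersection Λ₀. Let V₀ be a valuative submonoid of Λ₀, and for i = 1, 2 let Vᵢ be a valuative submonoid of Λᵢ which dominates V₀. Then the submonoid M := V₁·V₂ of Λ (generated by the images of V₁ and V₂) dominates the image of V₁ in Λ and also dominates the image of V₂ in Λ. -/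
/-- Let `Λ` be the pushout of abelian groups `Λ₁ ← Λ₀ → Λ₂`; concretely, `Λ` is an abelian
group with subgroups `Λ₁`, `Λ₂` such that `Λ₁ ⊔ Λ₂ = Λ` and `Λ₁ ⊓ Λ₂ = Λ₀` (this
characterizes the pushout of an injective span of abelian groups up to isomorphism).
Let `V₀` be a valuative submonoid of `Λ₀` and, for `i = 1, 2`, let `Vᵢ` be a valuative
submonoid of `Λᵢ` dominating `V₀`.  Then the submonoid `M = V₁ · V₂` of `Λ` (the join of
`V₁` and `V₂`) dominates `V₁` and dominates `V₂`. -/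
theorem pushout_product_dominates {Λ : Type*} [CommGroup Λ]
    (Λ₁ Λ₂ : Subgroup Λ) (hpushout : Λ₁ ⊔ Λ₂ = ⊤)
    (V₀ V₁ V₂ : Submonoid Λ)
    (hV₀le : V₀ ≤ (Λ₁ ⊓ Λ₂).toSubmonoid)
    (hV₀ : ∀ x ∈ Λ₁ ⊓ Λ₂, x ∈ V₀ ∨ x⁻¹ ∈ V₀)
    (hV₁le : V₁ ≤ Λ₁.toSubmonoid)
    (hV₁ : ∀ x ∈ Λ₁, x ∈ V₁ ∨ x⁻¹ ∈ V₁)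
    (hV₂le : V₂ ≤ Λ₂.toSubmonoid)
    (hV₂ : ∀ x ∈ Λ₂, x ∈ V₂ ∨ x⁻¹ ∈ V₂)
    (hdom₁ : V₀.Dominates V₁) (hdom₂ : V₀.Dominates V₂) :
    V₁.Dominates (V₁ ⊔ V₂) ∧ V₂.Dominates (V₁ ⊔ V₂) := by
  have key : ∀ (Λa Λb : Subgroup Λ) (Va Vb : Submonoid Λ)
      (_ : ∀ x ∈ Λa ⊓ Λb, x ∈ V₀ ∨ x⁻¹ ∈ V₀)
      (_ : Va ≤ Λa.toSubmonoid) (_ : Vb ≤ Λb.toSubmonoid)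
      (_ : V₀ ≤ Va) (_ : V₀ ≤ Vb)
      (_ : Vb.unitsSet ∩ (V₀ : Set Λ) = V₀.unitsSet),
      ∀ x ∈ Va, x⁻¹ ∈ Va ⊔ Vb → x⁻¹ ∈ Va := by
    intro Λa Λb Va Vb hval hVa hVb hV0a hV0b hdomb x hx hxi
    rw [Submonoid.mem_sup] at hxi
    obtain ⟨va, hva, vb, hvb, heq⟩ := hxi
    have hvbΛ : vb ∈ Λa ⊓ Λb := by
      refine ⟨?_, hVb hvb⟩
      have : vb = x⁻¹ * va⁻¹ := by
        rw [← heq, mul_comm va vb, mul_inv_cancel_right]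
      rw [this]
      exact Λa.mul_mem (Λa.inv_mem (hVa hx)) (Λa.inv_mem (hVa hva))
    have hvbVa : vb ∈ Va := by
      rcases hval vb hvbΛ with h | h
      · exact hV0a h
      · have hmem : vb⁻¹ ∈ Vb.unitsSet ∩ (V₀ : Set Λ) :=
          ⟨⟨hV0b h, by simpa using hvb⟩, h⟩
        rw [hdomb] at hmem
        have : vb ∈ V₀ := by simpa using hmem.2
        exact hV0a this
    rw [← heq]
    exact Va.mul_mem hva hvbVa
  have hV₀' : ∀ x ∈ Λ₂ ⊓ Λ₁, x ∈ V₀ ∨ x⁻¹ ∈ V₀ := by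
    intro x hx; exact hV₀ x ⟨hx.2, hx.1⟩
  have h1 : ∀ x ∈ V₁, x⁻¹ ∈ V₁ ⊔ V₂ → x⁻¹ ∈ V₁ :=
    key Λ₁ Λ₂ V₁ V₂ hV₀ hV₁le hV₂le hdom₁.1 hdom₂.1 hdom₂.2
  have h2 : ∀ x ∈ V₂, x⁻¹ ∈ V₂ ⊔ V₁ → x⁻¹ ∈ V₂ :=
    key Λ₂ Λ₁ V₂ V₁ hV₀' hV₂le hV₁le hdom₂.1 hdom₁.1 hdom₁.2
  constructor
  · refine ⟨le_sup_left, Set.Subset.antisymm ?_ ?_⟩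
    · rintro x ⟨⟨hxM, hxiM⟩, hxV⟩
      exact ⟨hxV, h1 x hxV hxiM⟩
    · rintro x ⟨hx, hxi⟩
      exact ⟨⟨Submonoid.mem_sup_left hx, Submonoid.mem_sup_left hxi⟩, hx⟩
  · refine ⟨le_sup_right, Set.Subset.antisymm ?_ ?_⟩
    · rintro x ⟨⟨hxM, hxiM⟩, hxV⟩
      refine ⟨hxV, h2 x hxV ?_⟩
      rwa [sup_comm]
    · rintro x ⟨hx, hxi⟩
      exact ⟨⟨Submonoid.mem_sup_right hx, Submonoid.mem_sup_right hxi⟩, hx⟩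
end

section
/- Let f : X → Y be a surjective continuous closed map of topological spaces such that the preimage of every point of Y is a connected (in particular nonempty) subset of X. Then the map C ↦ f⁻¹(C) is a bijection from the set of all closed open (clopen) subsets of Y onto the set of all closed open (clopen) subsets of X. -/
/-- Let `f : X → Y` be a surjective continuous closed map of topological spaces all of whose
fibers are connected (in particular nonempty).  Then `C ↦ f ⁻¹' C` is a bijection from the
set of clopen subsets of `Y` onto the set of clopen subsets of `X`. -/
theorem clopen_preimage_bijOn {X Y : Type*} [TopologicalSpace X] [TopologicalSpace Y]
    (f : X → Y) (hcont : Continuous f) (hsurj : Function.Surjective f)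
    (hclosed : IsClosedMap f) (hfib : ∀ y : Y, IsConnected (f ⁻¹' {y})) :
    Set.BijOn (fun C : Set Y => f ⁻¹' C) {C : Set Y | IsClopen C} {D : Set X | IsClopen D} := by
  refine ⟨fun C hC => hC.preimage hcont, fun C hC C' hC' h => ?_, fun D hD => ?_⟩
  · exact (Set.preimage_eq_preimage hsurj).mp h
  · -- key: each fiber is entirely in D or in Dᶜ
    have key : ∀ x : X, x ∈ D → f ⁻¹' {f x} ⊆ D := fun x hx =>
      (hfib (f x)).isPreconnected.subset_isClopen hD ⟨x, rfl, hx⟩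
    have hDc : IsClosed (f '' Dᶜ) := hclosed _ hD.2.isClosed_compl
    have hCeq : (f '' Dᶜ)ᶜ = f '' D := by
      ext y
      simp only [Set.mem_compl_iff, Set.mem_image, not_exists, not_and]
      constructor
      · intro h
        obtain ⟨x, rfl⟩ := hsurj y
        exact ⟨x, not_not.mp (fun hx => h x hx rfl), rfl⟩
      · rintro ⟨x, hx, rfl⟩ x' hx' hfx
        exact hx' (key x hx (by simp [hfx]))
    refine ⟨(f '' Dᶜ)ᶜ, ⟨hCeq ▸ hclosed _ hD.1, hDc.isOpen_compl⟩, ?_⟩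
    ext x
    simp only [Set.mem_preimage, Set.mem_compl_iff, Set.mem_image, not_exists, not_and]
    constructor
    · intro h
      by_contra hx
      exact h x hx rfl
    · intro hx x' hx' hfx
      exact hx' (key x hx (by simp [hfx]))
end

section
/- Let ℓ be a prime number, let L/K be a cyclic Galois extension of degree ℓ, and let B be the integral closure of A in L. Assume that the subgroup Γ_A of Γ_B has index ℓ, i.e. the quotient group Lˣ/(Bˣ·Kˣ) has order ℓ. Let s be a nonzero element of B whose class in Γ_B does not belong to Γ_A, i.e. there is no a ∈ Kˣ with s·a⁻¹ ∈ Bˣ. Then B·s^ℓ ⊆ A[s]; that is, for every x ∈ B, the element x·s^ℓ lies in the A-subalgebra of B generated by s. -/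
/-!
For every `t ∈ Lˣ` the power `t ^ ℓ` lies in `Bˣ·Kˣ`; as `A` is a valuation ring, this makes `t` or
`t⁻¹` integral over `A`, so `B` is a valuation ring of `L`. Since `[L : K] = ℓ` is prime and
`s ∉ K`, we may write `x s^ℓ = ∑_{i<ℓ} c_i s^i` with `c_i ∈ K`. Two terms `c_i s^i`, `c_j s^j` with
`i < j < ℓ` cannot have the same value, for otherwise `s^(j-i) ∈ Bˣ·Kˣ`, impossible in the group
`Lˣ/(Bˣ·Kˣ)` of prime order `ℓ` where `s` is nontrivial. So the value of the sum is the largest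
value of its terms, whence `v(c_i) v(s)^i ≤ v(x) v(s)^ℓ ≤ v(s)^i`, i.e. `c_i ∈ B ∩ K = A`.
-/

open Polynomial

theorem Subgroup.pow_notMem_of_index_eq_prime {G : Type*} [Group G] {H : Subgroup G} [H.Normal]
    {p : ℕ} (hp : p.Prime) (hH : H.index = p) {g : G} (hg : g ∉ H) {i : ℕ} (hi₀ : i ≠ 0)
    (hip : i < p) : g ^ i ∉ H := by
  have := Fact.mk hp
  have hgp : (g : G ⧸ H) ^ p = 1 := by
    rw [← QuotientGroup.mk_pow, QuotientGroup.eq_one_iff, ← hH]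
    exact H.pow_index_mem g
  have hord : orderOf (g : G ⧸ H) = p :=
    orderOf_eq_prime hgp (by rwa [Ne, QuotientGroup.eq_one_iff])
  rw [← QuotientGroup.eq_one_iff, QuotientGroup.mk_pow]
  exact pow_ne_one_of_lt_orderOf hi₀ (hord ▸ hip)

theorem Valuation.map_le_map_sum_of_injOn {R Γ₀ ι : Type*} [Ring R]
    [LinearOrderedCommMonoidWithZero Γ₀] (v : Valuation R Γ₀) {s : Finset ι} {f : ι → R}
    (hf : Set.InjOn (v ∘ f) s) {i : ι} (hi : i ∈ s) : v (f i) ≤ v (∑ j ∈ s, f j) := by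
  classical
  obtain ⟨j, hj, hmax⟩ := s.exists_max_image (v ∘ f) ⟨i, hi⟩
  rw [v.map_sum_eq_of_lt hj fun k hk => ?_]
  · exact hmax i hi
  · rw [Finset.mem_sdiff, Finset.mem_singleton] at hk
    exact (hmax k hk.1).lt_of_ne fun h => hk.2 (hf hk.1 hj h)

theorem exists_aeval_eq_of_finrank_prime {K L : Type*} [Field K] [Field L] [Algebra K L]
    [FiniteDimensional K L] (hp : (Module.finrank K L).Prime) {s : L}
    (hs : s ∉ Set.range (algebraMap K L)) (y : L) :
    ∃ f : K[X], f.natDegree < Module.finrank K L ∧ aeval s f = y := by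
  have := IntermediateField.isSimpleOrder_of_finrank_prime K L hp
  have hint : IsIntegral K s := .of_finite K s
  have htop : IntermediateField.adjoin K {s} = ⊤ := (eq_bot_or_eq_top _).resolve_left
    (by rwa [IntermediateField.adjoin_simple_eq_bot_iff, IntermediateField.mem_bot])
  let pb := PowerBasis.ofAdjoinEqTop hint
    (Algebra.adjoin_eq_top_of_primitive_element hint.isAlgebraic htop)
  obtain ⟨f, hf, hfy⟩ := pb.exists_eq_aeval y
  exact ⟨f, pb.finrank ▸ hf, hfy.symm⟩

section ValuationSubring

variable {K L : Type*} [Field K] [Field L] [Algebra K L] (O : ValuationSubring L)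

theorem ValuationSubring.pow_mem_unitGroup_sup_of_valuation_eq {s : Lˣ} {c d : K} (hc : c ≠ 0)
    (hd : d ≠ 0) {i k : ℕ}
    (h : O.valuation (algebraMap K L c * s ^ i) = O.valuation (algebraMap K L d * s ^ (i + k))) :
    s ^ k ∈ O.unitGroup ⊔ (Units.map (algebraMap K L).toMonoidHom).range := by
  have hvs : O.valuation s ≠ 0 := (O.valuation.ne_zero_iff).2 s.ne_zero
  have hvd : O.valuation (algebraMap K L d) ≠ 0 := by simpa using hd
  have key :
      O.valuation (algebraMap K L c) = O.valuation (algebraMap K L d) * O.valuation s ^ k := by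
    simp only [map_mul, map_pow, pow_add] at h
    exact mul_right_cancel₀ (pow_ne_zero i hvs) (by rw [h]; ac_rfl)
  let a : Lˣ := Units.map (algebraMap K L).toMonoidHom (Units.mk0 c hc / Units.mk0 d hd)
  have ha : (a : L) = algebraMap K L c / algebraMap K L d := by simp [a]
  rw [← inv_mul_cancel_right (s ^ k) a]
  refine Subgroup.mul_mem_sup ?_ ⟨_, rfl⟩
  rw [ValuationSubring.mem_unitGroup_iff, Units.val_mul, Units.val_pow_eq_pow_val,
    Units.val_inv_eq_inv_val, ha, map_mul, map_pow, map_inv₀, map_div₀, key,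
    mul_div_cancel_left₀ _ hvd, mul_inv_cancel₀ (pow_ne_zero k hvs)]

theorem ValuationSubring.algebraMap_coeff_mem {s y : L} (hs : s ∈ O) (hs₀ : s ≠ 0) (hy : y ∈ O)
    {n : ℕ} {f : K[X]} (hf : f.natDegree ≤ n)
    (hinj : Set.InjOn (fun i => O.valuation (algebraMap K L (f.coeff i) * s ^ i)) f.support)
    (hfy : aeval s f = y * s ^ n) (i : ℕ) : algebraMap K L (f.coeff i) ∈ O := by
  by_cases hi : i ∈ f.support
  swap
  · rw [notMem_support_iff.1 hi, map_zero]
    exact O.zero_mem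
  set v := O.valuation
  have hle : v (algebraMap K L (f.coeff i)) * v s ^ i ≤ 1 * v s ^ i := calc
    _ = v (algebraMap K L (f.coeff i) * s ^ i) := by rw [map_mul, map_pow]
    _ ≤ v (aeval s f) := by
      rw [aeval_def, eval₂_eq_sum, Polynomial.sum_def]
      exact v.map_le_map_sum_of_injOn hinj hi
    _ = v y * v s ^ n := by rw [hfy, map_mul, map_pow]
    _ ≤ 1 * v s ^ n := by gcongr; exact (O.valuation_le_one_iff y).2 hy
    _ ≤ 1 * v s ^ i := by
      rw [one_mul, one_mul]
      exact pow_le_pow_right_of_le_one' ((O.valuation_le_one_iff s).2 hs)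
        ((le_natDegree_of_mem_supp i hi).trans hf)
  rw [← O.valuation_le_one_iff]
  exact le_of_mul_le_mul_right hle (pow_pos (zero_lt_iff.2 ((v.ne_zero_iff).2 hs₀)) i)

theorem ValuationSubring.injOn_valuation_coeff_mul_pow {H : Subgroup Lˣ}
    (hOH : O.unitGroup ⊔ (Units.map (algebraMap K L).toMonoidHom).range ≤ H) {p : ℕ}
    (hp : p.Prime) (hH : H.index = p) {s : Lˣ} (hs : s ∉ H) {f : K[X]} (hf : f.natDegree < p) :
    Set.InjOn (fun i => O.valuation (algebraMap K L (f.coeff i) * s ^ i)) f.support := by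
  have hlt : ∀ i ∈ f.support, ∀ j ∈ f.support, i < j →
      O.valuation (algebraMap K L (f.coeff i) * s ^ i) ≠
        O.valuation (algebraMap K L (f.coeff j) * s ^ j) := by
    intro i hi j hj hij hv
    obtain ⟨k, rfl⟩ := Nat.exists_eq_add_of_lt hij
    have hjp := (le_natDegree_of_mem_supp _ hj).trans_lt hf
    exact Subgroup.pow_notMem_of_index_eq_prime hp hH hs k.succ_ne_zero (by omega)
      (hOH (O.pow_mem_unitGroup_sup_of_valuation_eq (mem_support_iff.1 hi)
        (mem_support_iff.1 hj) hv))
  intro i hi j hj hv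
  by_contra hij
  rcases Nat.lt_or_gt_of_ne hij with h | h
  exacts [hlt i hi j hj h hv, hlt j hj i hi h hv.symm]

end ValuationSubring

section IntegralClosure

/-- `Bˣ·Kˣ`, the elements of `Lˣ` whose value lies in `Γ_A`. -/
def unitsMulUnits (B K L : Type*) [CommRing B] [Field K] [Field L] [Algebra B L] [Algebra K L] :
    Subgroup Lˣ :=
  (Units.map (algebraMap B L).toMonoidHom).range ⊔ (Units.map (algebraMap K L).toMonoidHom).range

variable {B K L : Type*} [CommRing B] [Field K] [Field L] [Algebra B L] [Algebra K L]

theorem mem_unitsMulUnits {t : Lˣ} :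
    t ∈ unitsMulUnits B K L ↔
      ∃ (b : Bˣ) (a : Kˣ), (t : L) = algebraMap B L b * algebraMap K L a := by
  rw [unitsMulUnits, Subgroup.mem_sup]
  constructor
  · rintro ⟨_, ⟨b, rfl⟩, _, ⟨a, rfl⟩, rfl⟩
    exact ⟨b, a, rfl⟩
  · rintro ⟨b, a, h⟩
    exact ⟨_, ⟨b, rfl⟩, _, ⟨a, rfl⟩, Units.ext h.symm⟩

theorem ValuationSubring.unitGroup_le_unitsMulUnits {R : Type*} [CommRing R] [Algebra R L]
    {S : Subalgebra R L} {O : ValuationSubring L} (hO : ∀ x, x ∈ O ↔ x ∈ S) :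
    O.unitGroup ⊔ (Units.map (algebraMap K L).toMonoidHom).range ≤ unitsMulUnits S K L := by
  refine sup_le_sup_right (fun t ht => ?_) _
  have hmem (u : Lˣ) (hu : u ∈ O.unitGroup) : (u : L) ∈ S :=
    (hO _).1 ((O.valuation_le_one_iff _).1 hu.le)
  exact ⟨⟨⟨t, hmem t ht⟩, ⟨_, hmem t⁻¹ (inv_mem ht)⟩, Subtype.ext t.mul_inv, Subtype.ext t.inv_mul⟩,
    Units.ext rfl⟩

theorem integralClosure_mem_or_inv_mem {A : Type*} [CommRing A] [IsDomain A] [ValuationRing A]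
    [Algebra A K] [IsFractionRing A K] [Algebra A L] [IsScalarTower A K L] {n : ℕ} (hn : n ≠ 0)
    (hpow : ∀ t : Lˣ, t ^ n ∈ unitsMulUnits (integralClosure A L) K L) (t : L) :
    t ∈ integralClosure A L ∨ t⁻¹ ∈ integralClosure A L := by
  rcases eq_or_ne t 0 with rfl | ht
  · exact .inl (zero_mem _)
  obtain ⟨b, a, h⟩ := mem_unitsMulUnits.1 (hpow (Units.mk0 t ht))
  rw [Units.val_pow_eq_pow_val, Units.val_mk0] at h
  rcases ValuationRing.isInteger_or_isInteger A (a : K) with ⟨c, hc⟩ | ⟨c, hc⟩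
  · refine .inl (IsIntegral.of_pow (Nat.pos_of_ne_zero hn) ?_)
    rw [h, ← hc, ← IsScalarTower.algebraMap_apply]
    exact (b : integralClosure A L).2.mul isIntegral_algebraMap
  · refine .inr (IsIntegral.of_pow (Nat.pos_of_ne_zero hn) ?_)
    rw [inv_pow, h, mul_inv, ← map_units_inv, ← map_inv₀, ← hc, ← IsScalarTower.algebraMap_apply]
    exact (↑b⁻¹ : integralClosure A L).2.mul isIntegral_algebraMap

end IntegralClosure

theorem mul_pow_mem_adjoin_of_value_not_in_general
    {A K L : Type*} [CommRing A] [IsDomain A] [ValuationRing A]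
    [Field K] [Algebra A K] [IsFractionRing A K]
    [Field L] [Algebra K L] [Algebra A L] [IsScalarTower A K L]
    [IsGalois K L] [FiniteDimensional K L]
    (ℓ : ℕ) (hℓ : ℓ.Prime)
    (hcard : Nat.card (L ≃ₐ[K] L) = ℓ)
    (hindex : Nat.card
      (Lˣ ⧸ ((Units.map (algebraMap ↥(integralClosure A L) L).toMonoidHom).range ⊔
        (Units.map (algebraMap K L).toMonoidHom).range)) = ℓ)
    (s : ↥(integralClosure A L)) (hs : s ≠ 0)
    (hclass : ¬∃ (a : Kˣ) (b : (↥(integralClosure A L))ˣ),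
      (s : L) = ((b : ↥(integralClosure A L)) : L) * algebraMap K L (a : K)) :
    ∀ x : ↥(integralClosure A L),
      x * s ^ ℓ ∈ Algebra.adjoin A ({s} : Set ↥(integralClosure A L)) := by
  intro x
  change (unitsMulUnits (integralClosure A L) K L).index = ℓ at hindex
  let O : ValuationSubring L := { (integralClosure A L).toSubring with
    mem_or_inv_mem' := integralClosure_mem_or_inv_mem hℓ.ne_zero
      fun t => hindex ▸ Subgroup.pow_index_mem _ t }
  have hsL : (s : L) ≠ 0 := by simpa using hs
  have hsH : Units.mk0 (s : L) hsL ∉ unitsMulUnits (integralClosure A L) K L := fun h => by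
    obtain ⟨b, a, h⟩ := mem_unitsMulUnits.1 h
    exact hclass ⟨a, b, h⟩
  have hsK : (s : L) ∉ Set.range (algebraMap K L) := by
    rintro ⟨c, hc⟩
    exact hclass ⟨Units.mk0 c (by rintro rfl; exact hsL (by rw [← hc, map_zero])), 1, by simp [hc]⟩
  have hrank : Module.finrank K L = ℓ := by rw [← IsGalois.card_aut_eq_finrank, hcard]
  obtain ⟨f, hf, hfx⟩ := exists_aeval_eq_of_finrank_prime (hrank ▸ hℓ) hsK ((x * s ^ ℓ : _) : L)
  rw [hrank] at hf
  have hinj := O.injOn_valuation_coeff_mul_pow (O.unitGroup_le_unitsMulUnits fun _ => Iff.rfl)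
    hℓ hindex hsH hf
  have hcoeff (i : ℕ) : f.coeff i ∈ Set.range (algebraMap A K) := by
    have hB := O.algebraMap_coeff_mem s.2 hsL x.2 hf.le hinj (by rw [hfx]; push_cast; rfl) i
    exact IsIntegrallyClosed.isIntegral_iff.1
      ((isIntegral_algebraMap_iff (algebraMap K L).injective).1 hB)
  obtain ⟨g, rfl⟩ := (mem_lifts f).1 ((lifts_iff_coeff_lifts f).2 hcoeff)
  have hg : x * s ^ ℓ = aeval s g := by
    apply Subtype.ext
    rw [aeval_subalgebra_coe, ← hfx, aeval_map_algebraMap]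
  exact hg ▸ aeval_mem_adjoin_singleton A s

/-- Let `A` be a Henselian valuation ring which is not a field, with fraction field `K`, let
`ℓ` be a prime, let `L/K` be a cyclic Galois extension of degree `ℓ` and let `B` be the
integral closure of `A` in `L`.  Assume the value group `Γ_A = Kˣ/Aˣ` has index `ℓ` in
`Γ_B = Lˣ/Bˣ`, i.e. the quotient `Lˣ/(Bˣ·Kˣ)` has order `ℓ`.  Let `s` be a nonzero element
of `B` whose class in `Γ_B` does not lie in `Γ_A`.  Then `B·s^ℓ ⊆ A[s]`. -/
theorem mul_pow_mem_adjoin_of_value_not_in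
    {A K L : Type*} [CommRing A] [IsDomain A] [ValuationRing A] [HenselianLocalRing A]
    (hA : ¬IsField A)
    [Field K] [Algebra A K] [IsFractionRing A K]
    [Field L] [Algebra K L] [Algebra A L] [IsScalarTower A K L]
    [IsGalois K L] [FiniteDimensional K L]
    (ℓ : ℕ) (hℓ : ℓ.Prime) [IsCyclic (L ≃ₐ[K] L)]
    (hcard : Nat.card (L ≃ₐ[K] L) = ℓ)
    (hindex : Nat.card
      (Lˣ ⧸ ((Units.map (algebraMap ↥(integralClosure A L) L).toMonoidHom).range ⊔
        (Units.map (algebraMap K L).toMonoidHom).range)) = ℓ)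
    (s : ↥(integralClosure A L)) (hs : s ≠ 0)
    (hclass : ¬∃ (a : Kˣ) (b : (↥(integralClosure A L))ˣ),
      (s : L) = ((b : ↥(integralClosure A L)) : L) * algebraMap K L (a : K)) :
    ∀ x : ↥(integralClosure A L),
      x * s ^ ℓ ∈ Algebra.adjoin A ({s} : Set ↥(integralClosure A L)) :=
  mul_pow_mem_adjoin_of_value_not_in_general ℓ hℓ hcard hindex s hs hclass
end

section
/- Let L be a finite extension of K, let B be the integral closure of A in L, and let l be the residue field of B. Assume that [l : k] = [L : K] and that l = k(s̄) for some element s̄ ∈ l. Then for every lifting s̃ ∈ B of s̄ one has B = A[s̃], i.e. B equals the A-subalgebra of B generated by s̃. -/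
/-!
Let `s ∈ B` lift `s̄` and let `n = [L : K] = [l : k]`. Because `1, s̄, …, s̄ⁿ⁻¹` are linearly
independent over `k`, no `A`-combination `∑ dᵢ sⁱ` having some coefficient `dᵢ = 1` lies in the
maximal ideal of `B`. Dividing a `K`-combination `∑ aᵢ sⁱ` by its coefficient of largest
valuation produces such a combination, which shows both that `1, s, …, sⁿ⁻¹` are linearly
independent over `K`, hence a `K`-basis of `L`, and that a combination lying in `B` has all its
coefficients in `A`. So `B` is spanned over `A` by the powers of `s`.
-/

open IsLocalRing

namespace ValuationRing

variable {A K : Type*} [CommRing A] [IsDomain A] [ValuationRing A] [Field K] [Algebra A K]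
  [IsFractionRing A K]

theorem exists_forall_eq_algebraMap_mul {ι : Type*} [Finite ι] {a : ι → K}
    (ha : ∃ i, a i ≠ 0) :
    ∃ j, a j ≠ 0 ∧ ∃ d : ι → A, d j = 1 ∧ ∀ i, a i = algebraMap A K (d i) * a j := by
  have := Fintype.ofFinite ι
  obtain ⟨i₀, hi₀⟩ := ha
  obtain ⟨j, -, hj⟩ := Finset.univ.exists_max_image (fun i => valuation A K (a i))
    ⟨i₀, Finset.mem_univ _⟩
  have haj : a j ≠ 0 := fun h => hi₀ (by simpa [h] using hj i₀ (Finset.mem_univ _))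
  have hint (i : ι) : ∃ d : A, algebraMap A K d = a i / a j := by
    refine (mem_integer_iff A K _).mp ?_
    rw [Valuation.mem_integer_iff, map_div₀]
    exact div_le_one_of_le₀ (hj i (Finset.mem_univ _)) zero_le
  choose d hd using hint
  refine ⟨j, haj, d, IsFractionRing.injective A K ?_, fun i => ?_⟩
  · rw [hd, div_self haj, map_one]
  · rw [hd, div_mul_cancel₀ _ haj]

theorem exists_mem_maximalIdeal_algebraMap_eq_inv {x : K}
    (hx : ¬IsLocalization.IsInteger A x) :
    ∃ m ∈ maximalIdeal A, algebraMap A K m = x⁻¹ := by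
  obtain ⟨m, hm⟩ := (isInteger_or_isInteger A x).resolve_left hx
  refine ⟨m, fun ⟨u, hu⟩ => hx ⟨↑u⁻¹, ?_⟩, hm⟩
  rw [map_units_inv, hu, hm, inv_inv]

end ValuationRing

section Residue

variable {A B : Type*} [CommRing A] [IsLocalRing A] [CommRing B] [IsLocalRing B] [Algebra A B]
  [Algebra (ResidueField A) (ResidueField B)]

theorem mem_maximalIdeal_of_sum_smul_mem_maximalIdeal
    (halg : ∀ a : A, algebraMap (ResidueField A) (ResidueField B) (residue A a) =
      residue B (algebraMap A B a))
    {ι : Type*} [Fintype ι] {s : ι → B} (hs : LinearIndependent (ResidueField A) (residue B ∘ s))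
    {d : ι → A} (h : ∑ i, d i • s i ∈ maximalIdeal B) (i : ι) : d i ∈ maximalIdeal A := by
  have hsum : ∑ i, residue A (d i) • residue B (s i) = 0 := by
    rw [← (residue_eq_zero_iff _).mpr h, map_sum]
    refine Finset.sum_congr rfl fun i _ => ?_
    rw [Algebra.smul_def, Algebra.smul_def, map_mul, halg]
  exact (residue_eq_zero_iff _).mp (Fintype.linearIndependent_iff.mp hs _ hsum i)

end Residue

section Extension

variable {A K L : Type*} [CommRing A] [Field K] [Algebra A K] [CommRing L] [Algebra K L]
  [Algebra A L] [IsScalarTower A K L] {B : Subalgebra A L} {ι : Type*} [Fintype ι] {s : ι → B}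

theorem smul_coe_sum_smul {c : K} {a : ι → K} {d : ι → A}
    (h : ∀ i, a i = algebraMap A K (d i) * c) :
    c • ((∑ i, d i • s i : B) : L) = ∑ i, a i • (s i : L) := by
  push_cast
  rw [Finset.smul_sum]
  refine Finset.sum_congr rfl fun i _ => ?_
  rw [h, mul_comm, mul_smul, algebraMap_smul]

variable [IsDomain A] [ValuationRing A] [IsFractionRing A K]
  [IsLocalRing B] [Algebra (ResidueField A) (ResidueField B)]

theorem linearIndependent_coe_of_linearIndependent_residue
    (halg : ∀ a : A, algebraMap (ResidueField A) (ResidueField B) (residue A a) =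
      residue B (algebraMap A B a))
    (hs : LinearIndependent (ResidueField A) (residue B ∘ s)) :
    LinearIndependent K fun i => (s i : L) := by
  refine Fintype.linearIndependent_iff.mpr fun a ha => ?_
  by_contra! hne
  obtain ⟨j, haj, d, hdj, hd⟩ := ValuationRing.exists_forall_eq_algebraMap_mul (A := A) hne
  have hzero : (∑ i, d i • s i : B) = 0 := by
    have := smul_coe_sum_smul (s := s) hd
    rw [ha, smul_eq_zero] at this
    exact_mod_cast this.resolve_left haj
  have := mem_maximalIdeal_of_sum_smul_mem_maximalIdeal halg hs (hzero ▸ zero_mem _) j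
  exact (mem_maximalIdeal _).mp (hdj ▸ this) isUnit_one

theorem isInteger_of_sum_smul_eq
    (halg : ∀ a : A, algebraMap (ResidueField A) (ResidueField B) (residue A a) =
      residue B (algebraMap A B a))
    (hs : LinearIndependent (ResidueField A) (residue B ∘ s)) {a : ι → K} {x : B}
    (hx : ∑ i, a i • (s i : L) = x) (i : ι) : IsLocalization.IsInteger A (a i) := by
  by_contra hi
  obtain ⟨j, haj, d, hdj, hd⟩ := ValuationRing.exists_forall_eq_algebraMap_mul (A := A) (a := a)
    ⟨i, fun h => hi (h ▸ IsLocalization.isInteger_zero)⟩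
  have hj : ¬IsLocalization.IsInteger A (a j) := fun ⟨b, hb⟩ =>
    hi ⟨d i * b, by rw [map_mul, hb, ← hd]⟩
  obtain ⟨m, hm, hma⟩ := ValuationRing.exists_mem_maximalIdeal_algebraMap_eq_inv hj
  have hsum : ∑ i, d i • s i = m • x := by
    apply Subtype.ext
    rw [Subalgebra.coe_smul, ← algebraMap_smul K, hma, ← hx, ← smul_coe_sum_smul hd,
      inv_smul_smul₀ haj]
  have hmB : algebraMap A B m ∈ maximalIdeal B := by
    rw [← residue_eq_zero_iff, ← halg, (residue_eq_zero_iff _).mpr hm, map_zero]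
  have := mem_maximalIdeal_of_sum_smul_mem_maximalIdeal halg hs
    (hsum ▸ Algebra.smul_def m x ▸ Ideal.mul_mem_right _ _ hmB) j
  exact (mem_maximalIdeal _).mp (hdj ▸ this) isUnit_one

theorem span_range_eq_top_of_linearIndependent_residue [FiniteDimensional K L]
    (halg : ∀ a : A, algebraMap (ResidueField A) (ResidueField B) (residue A a) =
      residue B (algebraMap A B a))
    (hs : LinearIndependent (ResidueField A) (residue B ∘ s))
    (hcard : Fintype.card ι = Module.finrank K L) : Submodule.span A (Set.range s) = ⊤ := by
  have hspan := (linearIndependent_coe_of_linearIndependent_residue halg hs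
    ).span_eq_top_of_card_eq_finrank' hcard
  refine eq_top_iff.mpr fun x _ => ?_
  obtain ⟨a, ha⟩ := (Submodule.mem_span_range_iff_exists_fun K).mp (hspan ▸ Submodule.mem_top)
  choose d hd using isInteger_of_sum_smul_eq halg hs (x := x) ha
  refine (Submodule.mem_span_range_iff_exists_fun A).mpr ⟨d, Subtype.ext ?_⟩
  rw [← ha]
  push_cast
  simp only [← hd, algebraMap_smul]

end Extension

theorem integralClosure_eq_adjoin_of_residue_gen_general
    {A K L : Type*} [CommRing A] [IsDomain A] [ValuationRing A]
    [Field K] [Algebra A K] [IsFractionRing A K]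
    [Field L] [Algebra K L] [Algebra A L] [IsScalarTower A K L]
    [FiniteDimensional K L]
    [IsLocalRing ↥(integralClosure A L)]
    [Algebra (IsLocalRing.ResidueField A) (IsLocalRing.ResidueField ↥(integralClosure A L))]
    (halg : ∀ a : A,
      algebraMap (IsLocalRing.ResidueField A) (IsLocalRing.ResidueField ↥(integralClosure A L))
          (IsLocalRing.residue A a) =
        IsLocalRing.residue ↥(integralClosure A L) (algebraMap A ↥(integralClosure A L) a))
    (hdeg : Module.finrank (IsLocalRing.ResidueField A)
        (IsLocalRing.ResidueField ↥(integralClosure A L)) = Module.finrank K L)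
    (sbar : IsLocalRing.ResidueField ↥(integralClosure A L))
    (hgen : IntermediateField.adjoin (IsLocalRing.ResidueField A) {sbar} = ⊤)
    (slift : ↥(integralClosure A L)) (hlift : IsLocalRing.residue ↥(integralClosure A L) slift = sbar) :
    Algebra.adjoin A ({slift} : Set ↥(integralClosure A L)) = ⊤ := by
  have : Module.Finite (ResidueField A) (ResidueField (integralClosure A L)) :=
    Module.finite_of_finrank_pos (hdeg ▸ Module.finrank_pos)
  have hminpoly : (minpoly (ResidueField A) sbar).natDegree = Module.finrank K L := by
    rw [← IntermediateField.adjoin.finrank (.of_finite _ sbar), hgen,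
      IntermediateField.finrank_top', hdeg]
  have hs : LinearIndependent (ResidueField A)
      (residue (integralClosure A L) ∘ fun i : Fin (Module.finrank K L) => slift ^ (i : ℕ)) := by
    have := linearIndependent_pow (K := ResidueField A) sbar
    rw [hminpoly] at this
    simpa [Function.comp_def, hlift] using this
  have hspan := span_range_eq_top_of_linearIndependent_residue halg hs (Fintype.card_fin _)
  refine eq_top_iff.mpr fun x _ => ?_
  refine (Submodule.span_le (p := Subalgebra.toSubmodule (Algebra.adjoin A {slift}))).mpr ?_
    (hspan ▸ Submodule.mem_top : x ∈ Submodule.span A _)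
  rintro _ ⟨i, rfl⟩
  exact Subalgebra.pow_mem _ (Algebra.self_mem_adjoin_singleton A slift) _

/-- Let `A` be a Henselian valuation ring which is not a field, with fraction field `K` and
residue field `k`, let `L` be a finite extension of `K` and let `B` be the integral closure
of `A` in `L` (a Henselian local valuation ring), with residue field `l` (a `k`-algebra via
the map induced by `A → B`).  Assume `[l : k] = [L : K]` and that `l = k(sbar)` for some
`sbar ∈ l`.  Then for every lifting `slift ∈ B` of `sbar` one has `B = A[slift]`. -/
theorem integralClosure_eq_adjoin_of_residue_gen
    {A K L : Type*} [CommRing A] [IsDomain A] [ValuationRing A] [HenselianLocalRing A]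
    (hA : ¬IsField A)
    [Field K] [Algebra A K] [IsFractionRing A K]
    [Field L] [Algebra K L] [Algebra A L] [IsScalarTower A K L]
    [FiniteDimensional K L]
    [IsLocalRing ↥(integralClosure A L)]
    [Algebra (IsLocalRing.ResidueField A) (IsLocalRing.ResidueField ↥(integralClosure A L))]
    (halg : ∀ a : A,
      algebraMap (IsLocalRing.ResidueField A) (IsLocalRing.ResidueField ↥(integralClosure A L))
          (IsLocalRing.residue A a) =
        IsLocalRing.residue ↥(integralClosure A L) (algebraMap A ↥(integralClosure A L) a))
    (hdeg : Module.finrank (IsLocalRing.ResidueField A)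
        (IsLocalRing.ResidueField ↥(integralClosure A L)) = Module.finrank K L)
    (sbar : IsLocalRing.ResidueField ↥(integralClosure A L))
    (hgen : IntermediateField.adjoin (IsLocalRing.ResidueField A) {sbar} = ⊤)
    (slift : ↥(integralClosure A L)) (hlift : IsLocalRing.residue ↥(integralClosure A L) slift = sbar) :
    Algebra.adjoin A ({slift} : Set ↥(integralClosure A L)) = ⊤ :=
  integralClosure_eq_adjoin_of_residue_gen_general halg hdeg sbar hgen slift hlift
end
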